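/- Let W ⊆ ℝ^n be a linear subspace, y ∈ W, and J ⊆ {1,…,n}. Then there exists z ∈ W that is sign-consistent with y such that z_J = 0 and ‖z − y‖_∞ ≤ κ_W ‖y_J‖₁. -/

import Mathlib

open scoped BigOperators

variable {ι : Type*} [Fintype ι] [DecidableEq ι]

/-- The ℓ₁ norm of a vector. -/
noncomputable def norm1 (x : ι → ℝ) : ℝ := ∑ i, |x i|

/-- The ℓ∞ norm of a vector. -/
noncomputable def normInf (x : ι → ℝ) : ℝ := ⨆ i, |x i|

/-- The ℓ₂ norm of a vector. -/
noncomputable def norm2 (x : ι → ℝ) : ℝ := Real.sqrt (∑ i, (x i) ^ 2)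

/-- The componentwise negative part `max (-x) 0`. -/
noncomputable def vneg (x : ι → ℝ) : ι → ℝ := fun i => max (-(x i)) 0

/-- The componentwise positive part `max x 0`. -/
noncomputable def vpos (x : ι → ℝ) : ι → ℝ := fun i => max (x i) 0

/-- `y` is sign-consistent with `x`. -/
def SignConsistent (y x : ι → ℝ) : Prop :=
  (∀ i, 0 ≤ x i * y i) ∧ ∀ i, x i = 0 → y i = 0

/-- The subspace `ℝ^n_C` of vectors supported on `C`. -/
def coordSubspace (C : Set ι) : Submodule ℝ (ι → ℝ) where
  carrier := {x | ∀ i ∉ C, x i = 0}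
  zero_mem' := by intro i _; rfl
  add_mem' := by intro a b ha hb i hi; simp [ha i hi, hb i hi]
  smul_mem' := by intro c a ha i hi; simp [ha i hi]

/-- `C` is a circuit of the subspace `W`: `W ∩ ℝ^n_C` is one-dimensional and no
strict subset of `C` has this property. -/
def IsCircuit (W : Submodule ℝ (ι → ℝ)) (C : Set ι) : Prop :=
  Module.finrank ℝ ↥(W ⊓ coordSubspace C) = 1 ∧
  ∀ C' : Set ι, C' ⊂ C → Module.finrank ℝ ↥(W ⊓ coordSubspace C') ≠ 1

/-- The circuit imbalance measure `κ_W`. -/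
noncomputable def kappa (W : Submodule ℝ (ι → ℝ)) : ℝ :=
  sSup ({1} ∪ {r | ∃ C : Set ι, IsCircuit W C ∧ ∃ g ∈ W, g ≠ 0 ∧ {i | g i ≠ 0} = C ∧
    r = sSup ((fun i => |g i|) '' C) / sInf ((fun i => |g i|) '' C)})

/-- The matroidal closure of `K` with respect to `W`. -/
def clos (W : Submodule ℝ (ι → ℝ)) (K : Set ι) : Set ι :=
  K ∪ {j | j ∉ K ∧ ∃ C : Set ι, IsCircuit W C ∧ j ∈ C ∧ C ⊆ K ∪ {j}}

/-- `z` is the minimum-norm lift `L_I^W(p)` of `p` to `W`: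
`z ∈ W`, `z` agrees with `p` on `I`, and `z` has minimum ℓ₂-norm among such vectors. -/
def IsMinLift (W : Submodule ℝ (ι → ℝ)) (I : Finset ι) (p z : ι → ℝ) : Prop :=
  z ∈ W ∧ (∀ i ∈ I, z i = p i) ∧
  ∀ z' ∈ W, (∀ i ∈ I, z' i = p i) → norm2 z ≤ norm2 z'

/-- The ℓ₂→ℓ₂ operator norm of the lifting map `L_I^W` on `π_I(W)`. -/
noncomputable def liftOpNorm (W : Submodule ℝ (ι → ℝ)) (I : Finset ι) : ℝ :=
  sSup {r | ∃ p z, IsMinLift W I p z ∧ r = norm2 z / Real.sqrt (∑ i ∈ I, (p i) ^ 2)}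

/-- The condition number `χ̄_W = max{‖L_I^W‖ : ∅ ≠ I}`. -/
noncomputable def chiBar (W : Submodule ℝ (ι → ℝ)) : ℝ :=
  sSup {r | ∃ I : Finset ι, I.Nonempty ∧ r = liftOpNorm W I}

/-- The orthogonal complement of `W` in `ℝ^n`. -/
def orthComp (W : Submodule ℝ (ι → ℝ)) : Submodule ℝ (ι → ℝ) where
  carrier := {y | ∀ x ∈ W, ∑ i, x i * y i = 0}
  zero_mem' := by intro x hx; simp
  add_mem' := by
    intro a b ha hb x hx
    simpa [mul_add, Finset.sum_add_distrib, ha x hx] using hb x hx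
  smul_mem' := by
    intro c a ha x hx
    have h := ha x hx
    have : ∑ i, x i * (c • a) i = c * ∑ i, x i * a i := by
      rw [Finset.mul_sum]
      refine Finset.sum_congr rfl fun i _ => ?_
      simp [Pi.smul_apply, smul_eq_mul]; ring
    simpa [this, h]

/-- `x` is a feasible solution to the primal program of Primal-Dual(W,d,c). -/
def PrimalFeasible (W : Submodule ℝ (ι → ℝ)) (d x : ι → ℝ) : Prop :=
  x - d ∈ W ∧ ∀ i, 0 ≤ x i

/-- `s` is a feasible solution to the dual program of Primal-Dual(W,d,c). -/
def DualFeasible (W : Submodule ℝ (ι → ℝ)) (c s : ι → ℝ) : Prop :=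
  s - c ∈ orthComp W ∧ ∀ i, 0 ≤ s i

/-- `(x,s)` is an optimal solution to Primal-Dual(W,d,c): both feasible and `⟨x,s⟩ = 0`. -/
def IsOptimalPair (W : Submodule ℝ (ι → ℝ)) (d c x s : ι → ℝ) : Prop :=
  PrimalFeasible W d x ∧ DualFeasible W c s ∧ ∑ i, x i * s i = 0

/-- The ℓ₂→ℓ₂ operator norm of a matrix. -/
noncomputable def l2OpNorm {m n : Type*} [Fintype m] [Fintype n] [DecidableEq n]
    (A : Matrix m n ℝ) : ℝ :=
  ‖LinearMap.toContinuousLinearMap (Matrix.toEuclideanLin A)‖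

/-- The max-norm (largest absolute value of an entry) of a matrix. -/
noncomputable def matMaxNorm {m n : Type*} [Fintype m] [Fintype n] (A : Matrix m n ℝ) : ℝ :=
  ⨆ i, ⨆ j, |A i j|


/-!
Decompose `y` conformally into circuit vectors: a nonzero vector of `W` that is sign-consistent
with `y` and has minimal support is supported on a circuit, and subtracting the largest multiple of
it that keeps sign-consistency shrinks the support of `y`. Let `z` be the sum of the circuit vectors
of the decomposition that vanish on `J`. Every other one, `g`, meets `J`, so
`‖g‖∞ ≤ κ_W ‖g_J‖₁`, and by conformality these ℓ₁-norms add up to `‖y_J‖₁`.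
-/

open Function
open scoped Pointwise

section
variable {ι : Type*}

theorem mem_coordSubspace_iff_support_subset {C : Set ι} {x : ι → ℝ} :
    x ∈ coordSubspace C ↔ support x ⊆ C :=
  support_subset_iff'.symm

namespace SignConsistent

theorem refl (y : ι → ℝ) : SignConsistent y y :=
  ⟨fun i => mul_self_nonneg (y i), fun _ h => h⟩

theorem support_subset {x y : ι → ℝ} (h : SignConsistent x y) : support x ⊆ support y :=
  fun i hx hy => hx (h.2 i hy)

theorem trans {x y w : ι → ℝ} (hxy : SignConsistent x y) (hyw : SignConsistent y w) :
    SignConsistent x w := by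
  refine ⟨fun i => ?_, fun i hw => hxy.2 i (hyw.2 i hw)⟩
  by_cases hy : y i = 0
  · simp [hxy.2 i hy]
  · have h : 0 ≤ w i * x i * (y i * y i) := by nlinarith [hxy.1 i, hyw.1 i]
    exact nonneg_of_mul_nonneg_left h (mul_self_pos.2 hy)

theorem zero (y : ι → ℝ) : SignConsistent 0 y :=
  ⟨fun _ => by simp, fun _ _ => rfl⟩

theorem add {x x' y : ι → ℝ} (hx : SignConsistent x y) (hx' : SignConsistent x' y) :
    SignConsistent (x + x') y :=
  ⟨fun i => by simpa [mul_add] using add_nonneg (hx.1 i) (hx'.1 i),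
    fun i hy => by simp [hx.2 i hy, hx'.2 i hy]⟩

theorem smul {x y : ι → ℝ} (h : SignConsistent x y) {c : ℝ} (hc : 0 ≤ c) :
    SignConsistent (c • x) y :=
  ⟨fun i => by simpa [mul_left_comm] using mul_nonneg hc (h.1 i), fun i hy => by simp [h.2 i hy]⟩

theorem sum {σ : Type*} {s : Finset σ} {g : σ → ι → ℝ} {y : ι → ℝ}
    (h : ∀ k ∈ s, SignConsistent (g k) y) : SignConsistent (∑ k ∈ s, g k) y :=
  Finset.sum_induction _ (SignConsistent · y) (fun _ _ => add) (zero y) h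

theorem nonneg_of_nonneg {x y : ι → ℝ} (h : SignConsistent x y) {i : ι} (hy : 0 ≤ y i) :
    0 ≤ x i := by
  rcases hy.eq_or_lt with hy | hy
  · exact (h.2 i hy.symm).ge
  · exact nonneg_of_mul_nonneg_right (h.1 i) hy

theorem nonpos_of_nonpos {x y : ι → ℝ} (h : SignConsistent x y) {i : ι} (hy : y i ≤ 0) :
    x i ≤ 0 := by
  rcases hy.eq_or_lt with hy | hy
  · exact (h.2 i hy).le
  · exact nonpos_of_mul_nonneg_right (h.1 i) hy

theorem abs_sum_apply {σ : Type*} {s : Finset σ} {g : σ → ι → ℝ} {y : ι → ℝ}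
    (h : ∀ k ∈ s, SignConsistent (g k) y) (i : ι) :
    |∑ k ∈ s, g k i| = ∑ k ∈ s, |g k i| := by
  rcases le_total 0 (y i) with hy | hy
  · have hg : ∀ k ∈ s, 0 ≤ g k i := fun k hk => (h k hk).nonneg_of_nonneg hy
    rw [abs_of_nonneg (Finset.sum_nonneg hg)]
    exact Finset.sum_congr rfl fun k hk => (abs_of_nonneg (hg k hk)).symm
  · have hg : ∀ k ∈ s, g k i ≤ 0 := fun k hk => (h k hk).nonpos_of_nonpos hy
    rw [abs_of_nonpos (Finset.sum_nonpos hg), ← Finset.sum_neg_distrib]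
    exact Finset.sum_congr rfl fun k hk => (abs_of_nonpos (hg k hk)).symm

end SignConsistent

theorem isCircuit_support_of_minimal {W : Submodule ℝ (ι → ℝ)} {g : ι → ℝ} (hgW : g ∈ W)
    (hg : g ≠ 0) (hmin : ∀ h ∈ W, support h ⊂ support g → h = 0) :
    IsCircuit W (support g) := by
  have hgC : g ∈ W ⊓ coordSubspace (support g) :=
    ⟨hgW, mem_coordSubspace_iff_support_subset.2 subset_rfl⟩
  refine ⟨(finrank_eq_one_iff_of_nonzero' (⟨g, hgC⟩ : ↥(W ⊓ coordSubspace (support g)))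
    (by simpa using hg)).2 ?_, fun C hC hrank => ?_⟩
  · rintro ⟨h, hhW, hhC⟩
    obtain ⟨i, hi⟩ := support_nonempty_iff.2 hg
    refine ⟨h i / g i,
      Subtype.ext (sub_eq_zero.1 (hmin _ (W.sub_mem hhW (W.smul_mem _ hgW)) ?_)).symm⟩
    refine ⟨fun j hj => by_contra fun hgj => hj ?_,
      fun hsub => hsub hi (by simp [div_mul_cancel₀ _ (mem_support.1 hi)])⟩
    simp [hhC j hgj, notMem_support.1 hgj]
  · have hne : W ⊓ coordSubspace C ≠ ⊥ := by
      rintro hbot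
      rw [hbot, finrank_bot] at hrank
      exact zero_ne_one hrank
    obtain ⟨x, ⟨hxW, hxC⟩, hx⟩ := Submodule.exists_mem_ne_zero_of_ne_bot hne
    exact hx (hmin x hxW ((mem_coordSubspace_iff_support_subset.1 hxC).trans_ssubset hC))

theorem IsCircuit.exists_eq_smul {W : Submodule ℝ (ι → ℝ)} {C : Set ι} (hC : IsCircuit W C)
    {g g₀ : ι → ℝ} (hg : g ∈ W ⊓ coordSubspace C) (hg₀ : g₀ ∈ W ⊓ coordSubspace C)
    (hg₀0 : g₀ ≠ 0) : ∃ c : ℝ, g = c • g₀ := by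
  obtain ⟨c, hc⟩ := (finrank_eq_one_iff_of_nonzero' (⟨g₀, hg₀⟩ : ↥(W ⊓ coordSubspace C))
    (by simpa using hg₀0)).1 hC.1 ⟨g, hg⟩
  exact ⟨c, congrArg Subtype.val hc.symm⟩

noncomputable def imbalance (g : ι → ℝ) : ℝ :=
  sSup ((fun i => |g i|) '' support g) / sInf ((fun i => |g i|) '' support g)

theorem imbalance_nonneg (g : ι → ℝ) : 0 ≤ imbalance g := by
  have habs : ∀ x ∈ (fun i => |g i|) '' support g, 0 ≤ x := by
    rintro _ ⟨i, -, rfl⟩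
    exact abs_nonneg (g i)
  exact div_nonneg (Real.sSup_nonneg habs) (Real.sInf_nonneg habs)

theorem imbalance_smul (g : ι → ℝ) {c : ℝ} (hc : c ≠ 0) : imbalance (c • g) = imbalance g := by
  have himg : (fun i => |(c • g) i|) '' support (c • g) = |c| • (fun i => |g i|) '' support g := by
    rw [support_const_smul_of_ne_zero _ _ hc, ← Set.image_smul, Set.image_image]
    simp [abs_mul]
  rw [imbalance, himg, Real.sSup_smul_of_nonneg (abs_nonneg c),
    Real.sInf_smul_of_nonneg (abs_nonneg c), smul_eq_mul, smul_eq_mul,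
    mul_div_mul_left _ _ (abs_ne_zero.2 hc), imbalance]

theorem abs_le_imbalance_mul_abs [Finite ι] {g : ι → ℝ} {j : ι} (hj : g j ≠ 0) (i : ι) :
    |g i| ≤ imbalance g * |g j| := by
  by_cases hi : g i = 0
  · simpa [hi] using mul_nonneg (imbalance_nonneg g) (abs_nonneg (g j))
  set s := (fun i => |g i|) '' support g
  have hfin : s.Finite := (Set.toFinite _).image _
  have hinf : 0 < sInf s := by
    obtain ⟨k, hk, hsk⟩ := (Set.Nonempty.image _ ⟨j, hj⟩ : s.Nonempty).csInf_mem hfin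
    exact hsk ▸ abs_pos.2 hk
  calc |g i| ≤ sSup s := le_csSup hfin.bddAbove ⟨i, hi, rfl⟩
    _ = imbalance g * sInf s := (div_mul_cancel₀ _ hinf.ne').symm
    _ ≤ imbalance g * |g j| :=
      mul_le_mul_of_nonneg_left (csInf_le hfin.bddBelow ⟨j, hj, rfl⟩) (imbalance_nonneg g)

theorem kappa_eq_sSup_imbalance (W : Submodule ℝ (ι → ℝ)) :
    kappa W = sSup (insert 1 (imbalance '' {g | g ∈ W ∧ g ≠ 0 ∧ IsCircuit W (support g)})) := by
  rw [kappa, Set.singleton_union]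
  congr 2
  ext r
  constructor
  · rintro ⟨_, hC, g, hgW, hg, rfl, rfl⟩
    exact ⟨g, ⟨hgW, hg, hC⟩, rfl⟩
  · rintro ⟨g, ⟨hgW, hg, hC⟩, rfl⟩
    exact ⟨_, hC, g, hgW, hg, rfl, rfl⟩

theorem finite_imbalance_image [Finite ι] (W : Submodule ℝ (ι → ℝ)) :
    (imbalance '' {g | g ∈ W ∧ g ≠ 0 ∧ IsCircuit W (support g)}).Finite := by
  -- vectors on a common circuit are proportional, so each circuit contributes one value
  refine (Set.finite_iUnion fun C : Set ι => Set.Subsingleton.finite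
    (s := imbalance '' {g | g ∈ W ∧ g ≠ 0 ∧ IsCircuit W C ∧ support g = C}) ?_).subset ?_
  · rintro _ ⟨g, ⟨hgW, hg, hC, rfl⟩, rfl⟩ _ ⟨g₀, ⟨hg₀W, hg₀, -, hsupp⟩, rfl⟩
    obtain ⟨c, rfl⟩ := hC.exists_eq_smul ⟨hgW, mem_coordSubspace_iff_support_subset.2 subset_rfl⟩
      ⟨hg₀W, mem_coordSubspace_iff_support_subset.2 hsupp.subset⟩ hg₀
    exact imbalance_smul g₀ (left_ne_zero_of_smul hg)
  · rintro _ ⟨g, ⟨hgW, hg, hC⟩, rfl⟩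
    exact Set.mem_iUnion.2 ⟨support g, g, ⟨hgW, hg, hC, rfl⟩, rfl⟩

theorem one_le_kappa [Finite ι] (W : Submodule ℝ (ι → ℝ)) : 1 ≤ kappa W := by
  rw [kappa_eq_sSup_imbalance]
  exact le_csSup ((finite_imbalance_image W).insert 1).bddAbove (Set.mem_insert 1 _)

theorem kappa_nonneg [Finite ι] (W : Submodule ℝ (ι → ℝ)) : 0 ≤ kappa W :=
  zero_le_one.trans (one_le_kappa W)

theorem abs_le_kappa_mul_abs [Finite ι] {W : Submodule ℝ (ι → ℝ)} {g : ι → ℝ} (hgW : g ∈ W)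
    (hC : IsCircuit W (support g)) {j : ι} (hj : g j ≠ 0) (i : ι) :
    |g i| ≤ kappa W * |g j| := by
  have hg : g ≠ 0 := ne_of_apply_ne (· j) hj
  have hle : imbalance g ≤ kappa W := by
    rw [kappa_eq_sSup_imbalance]
    exact le_csSup ((finite_imbalance_image W).insert 1).bddAbove
      (Set.mem_insert_of_mem 1 ⟨g, ⟨hgW, hg, hC⟩, rfl⟩)
  exact (abs_le_imbalance_mul_abs hj i).trans (mul_le_mul_of_nonneg_right hle (abs_nonneg _))

theorem exists_signConsistent_sub_smul [Finite ι] {g h : ι → ℝ} (hh : h ≠ 0)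
    (hhg : support h ⊆ support g) :
    ∃ k, h k ≠ 0 ∧ SignConsistent (g - (g k / h k) • h) g := by
  obtain ⟨k, hk, hmin⟩ := Set.exists_min_image (support h) (fun i => |g i / h i|)
    (Set.toFinite _) (support_nonempty_iff.2 hh)
  refine ⟨k, hk, fun i => ?_, fun i hgi => ?_⟩
  · set t := g k / h k
    by_cases hhi : h i = 0
    · simpa [hhi] using mul_self_nonneg (g i)
    have hratio : |t| * |h i| ≤ |g i| := by
      simpa [abs_div, le_div_iff₀ (abs_pos.2 hhi)] using hmin i hhi
    have habs : t * h i * g i ≤ |t| * |h i| * |g i| := by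
      rw [← abs_mul, ← abs_mul]; exact le_abs_self _
    have hmul := mul_le_mul_of_nonneg_right hratio (abs_nonneg (g i))
    simp only [Pi.sub_apply, Pi.smul_apply, smul_eq_mul]
    nlinarith [abs_mul_abs_self (g i)]
  · have hhi : h i = 0 := not_not.1 fun hhi => hhg hhi hgi
    simp [hgi, hhi]

theorem exists_signConsistent_isCircuit [Finite ι] {W : Submodule ℝ (ι → ℝ)} {y : ι → ℝ}
    (hy : y ∈ W) (hy0 : y ≠ 0) :
    ∃ g ∈ W, g ≠ 0 ∧ SignConsistent g y ∧ IsCircuit W (support g) := by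
  obtain ⟨g, ⟨hgW, hg, hgy⟩, hmin⟩ := (measure fun g : ι → ℝ => (support g).ncard).wf.has_min
    {g | g ∈ W ∧ g ≠ 0 ∧ SignConsistent g y} ⟨y, hy, hy0, SignConsistent.refl y⟩
  refine ⟨g, hgW, hg, hgy, isCircuit_support_of_minimal hgW hg fun h hhW hsub => ?_⟩
  by_contra hh
  obtain ⟨k, hhk, hu⟩ := exists_signConsistent_sub_smul hh hsub.subset
  have huk : (g - (g k / h k) • h) k = 0 := by simp [div_mul_cancel₀ _ hhk]
  have hu0 : g - (g k / h k) • h ≠ 0 := fun h0 =>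
    hsub.not_subset ((sub_eq_zero.1 h0).symm ▸ support_const_smul_subset _ _)
  exact hmin _ ⟨W.sub_mem hgW (W.smul_mem _ hhW), hu0, hu.trans hgy⟩
    (Set.ncard_lt_ncard ⟨hu.support_subset, fun hsup => hsup (hsub.subset hhk) huk⟩)

theorem exists_signConsistent_isCircuit_decomposition [Finite ι] {W : Submodule ℝ (ι → ℝ)}
    {y : ι → ℝ} (hy : y ∈ W) :
    ∃ (m : ℕ) (g : Fin m → ι → ℝ),
      (∀ k, g k ∈ W ∧ SignConsistent (g k) y ∧ IsCircuit W (support (g k))) ∧ ∑ k, g k = y := by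
  induction hN : (support y).ncard using Nat.strong_induction_on generalizing y with
  | _ N ih =>
    by_cases hy0 : y = 0
    · exact ⟨0, Fin.elim0, fun k => k.elim0, by simp [hy0]⟩
    obtain ⟨g, hgW, hg, hgy, hC⟩ := exists_signConsistent_isCircuit hy hy0
    obtain ⟨k, hgk, hy'⟩ := exists_signConsistent_sub_smul hg hgy.support_subset
    have hyk : y k ≠ 0 := hgy.support_subset hgk
    have ht : 0 < y k / g k := by
      have hpos : 0 < y k * g k := (hgy.1 k).lt_of_ne (mul_ne_zero hyk hgk).symm
      simpa [mul_div_mul_right _ _ hgk] using div_pos hpos (mul_self_pos.2 hgk)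
    have hlt : (support (y - (y k / g k) • g)).ncard < N := hN ▸ Set.ncard_lt_ncard
      ⟨hy'.support_subset, fun hsup => hsup hyk (by simp [div_mul_cancel₀ _ hgk])⟩
    obtain ⟨m, g', hg', hsum⟩ := ih _ hlt (W.sub_mem hy (W.smul_mem _ hgW)) rfl
    refine ⟨m + 1, Fin.cons ((y k / g k) • g) g', fun l => ?_, by simp [Fin.sum_univ_succ, hsum]⟩
    cases l using Fin.cases with
    | zero =>
      exact ⟨W.smul_mem _ hgW, hgy.smul ht.le, by
        rwa [Fin.cons_zero, support_const_smul_of_ne_zero _ _ ht.ne']⟩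
    | succ l => exact ⟨(hg' l).1, (hg' l).2.1.trans hy', (hg' l).2.2⟩

theorem abs_sum_apply_le_kappa_mul [Finite ι] {σ : Type*} [Fintype σ] {W : Submodule ℝ (ι → ℝ)}
    {g : σ → ι → ℝ}
    (hg : ∀ k, g k ∈ W ∧ SignConsistent (g k) (∑ k, g k) ∧ IsCircuit W (support (g k)))
    {J : Finset ι} {t : Finset σ} (ht : ∀ k ∈ t, ∃ j ∈ J, g k j ≠ 0) (i : ι) :
    |∑ k ∈ t, g k i| ≤ kappa W * ∑ j ∈ J, |(∑ k, g k) j| := by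
  have hκ := kappa_nonneg W
  have hterm : ∀ k, 0 ≤ kappa W * ∑ j ∈ J, |g k j| := fun k =>
    mul_nonneg hκ (Finset.sum_nonneg fun j _ => abs_nonneg (g k j))
  have hk : ∀ k ∈ t, |g k i| ≤ kappa W * ∑ j ∈ J, |g k j| := by
    intro k hk
    obtain ⟨j, hj, hgj⟩ := ht k hk
    exact (abs_le_kappa_mul_abs (hg k).1 (hg k).2.2 hgj i).trans
      (mul_le_mul_of_nonneg_left (Finset.single_le_sum (fun j _ => abs_nonneg (g k j)) hj) hκ)
  calc |∑ k ∈ t, g k i| ≤ ∑ k ∈ t, |g k i| := Finset.abs_sum_le_sum_abs _ _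
    _ ≤ ∑ k ∈ t, kappa W * ∑ j ∈ J, |g k j| := Finset.sum_le_sum hk
    _ ≤ ∑ k, kappa W * ∑ j ∈ J, |g k j| :=
      Finset.sum_le_sum_of_subset_of_nonneg (Finset.subset_univ t) fun k _ _ => hterm k
    _ = kappa W * ∑ j ∈ J, |(∑ k, g k) j| := by
      rw [← Finset.mul_sum, Finset.sum_comm]
      simp only [Finset.sum_apply, SignConsistent.abs_sum_apply fun k _ => (hg k).2.1]

end

/-- every `y ∈ W` can be rounded to a sign-consistent `z ∈ W` with
`z_J = 0` and `‖z − y‖_∞ ≤ κ_W ‖y_J‖₁`. -/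
theorem sign_consistent_rounding {n : ℕ} (W : Submodule ℝ (Fin n → ℝ))
    (y : Fin n → ℝ) (hy : y ∈ W) (J : Finset (Fin n)) :
    ∃ z : Fin n → ℝ, z ∈ W ∧ SignConsistent z y ∧ (∀ i ∈ J, z i = 0) ∧
      normInf (z - y) ≤ kappa W * ∑ i ∈ J, |y i| := by
  classical
  obtain ⟨m, g, hg, rfl⟩ := exists_signConsistent_isCircuit_decomposition hy
  set s := Finset.univ.filter fun k => ∀ j ∈ J, g k j = 0
  refine ⟨∑ k ∈ s, g k, W.sum_mem fun k _ => (hg k).1, SignConsistent.sum fun k _ => (hg k).2.1,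
    fun j hj => ?_, Real.iSup_le (fun i => ?_) ?_⟩
  · rw [Finset.sum_apply]
    exact Finset.sum_eq_zero fun k hk => (Finset.mem_filter.1 hk).2 j hj
  · have hdrop : (∑ k ∈ s, g k - ∑ k, g k) i = -∑ k ∈ sᶜ, g k i := by
      rw [← Finset.sum_compl_add_sum s]
      simp [Finset.sum_apply]
    rw [hdrop, abs_neg]
    exact abs_sum_apply_le_kappa_mul hg (fun k hk => by simpa [s] using hk) i
  · exact mul_nonneg (kappa_nonneg W) (Finset.sum_nonneg fun j _ => abs_nonneg _)
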